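/- arXiv:2205.09647 — 5 statements merged into one kernel-verified Lean document; each statement's English description precedes it below -/
import Mathlib

section
/- For any integer p ≥ 1, any η > 0, and any natural number k, define β_k = η · Σ_{l=0}^{k} (1+l)^{(3p-1)/2} and λ_k = η²(1+k)^{3p-1} / β_k (equivalently λ_k = η_k²/β_k with η_k = η(1+k)^{(3p-1)/2}). Then λ_k ≤ (η(3p+1)/2) · (1+k)^{3(p-1)/2}. -/
open Finset

theorem lambda_upper_bound (p : ℕ) (hp : 1 ≤ p) (η : ℝ) (hη : 0 < η) (k : ℕ) :
    η ^ 2 * ((1 : ℝ) + (k : ℝ)) ^ (3 * (p : ℝ) - 1) /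
        (η * ∑ l ∈ Finset.range (k + 1), ((1 : ℝ) + (l : ℝ)) ^ ((3 * (p : ℝ) - 1) / 2)) ≤
      η * (3 * (p : ℝ) + 1) / 2 * ((1 : ℝ) + (k : ℝ)) ^ (3 * ((p : ℝ) - 1) / 2) := by
  set q : ℝ := (3 * (p : ℝ) - 1) / 2 with hq
  have hp1 : (1 : ℝ) ≤ (p : ℝ) := by exact_mod_cast hp
  have hq1 : (1 : ℝ) ≤ q := by rw [hq]; linarith
  have hx : (1 : ℝ) ≤ 1 + (k : ℝ) := by linarith [Nat.cast_nonneg (α := ℝ) k]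
  have hx0 : (0 : ℝ) < 1 + (k : ℝ) := by positivity
  -- integral lower bound for the sum
  have hmono : MonotoneOn (fun x : ℝ => x ^ q) (Set.Icc (0 : ℝ) (0 + (k + 1 : ℕ))) := by
    intro a ha b hb hab
    exact Real.rpow_le_rpow ha.1 hab (by linarith)
  have hint := MonotoneOn.integral_le_sum (a := k + 1) (x₀ := 0) hmono
  have hval : (∫ x in (0 : ℝ)..(0 + (k + 1 : ℕ)), x ^ q) = ((k : ℝ) + 1) ^ (q + 1) / (q + 1) := by
    rw [integral_rpow (Or.inl (by linarith))]
    push_cast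
    rw [Real.zero_rpow (by linarith)]
    ring_nf
  have hsum_eq : ∑ i ∈ Finset.range (k + 1), ((0 : ℝ) + (i + 1 : ℕ)) ^ q
      = ∑ l ∈ Finset.range (k + 1), ((1 : ℝ) + (l : ℝ)) ^ q := by
    apply Finset.sum_congr rfl
    intro i _
    push_cast
    ring_nf
  have hS : ((1 : ℝ) + (k : ℝ)) ^ (q + 1) / (q + 1) ≤
      ∑ l ∈ Finset.range (k + 1), ((1 : ℝ) + (l : ℝ)) ^ q := by
    rw [← hsum_eq]
    calc ((1 : ℝ) + (k : ℝ)) ^ (q + 1) / (q + 1)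
        = ((k : ℝ) + 1) ^ (q + 1) / (q + 1) := by ring_nf
      _ = ∫ x in (0 : ℝ)..(0 + (k + 1 : ℕ)), x ^ q := hval.symm
      _ ≤ _ := hint
  have hSpos : (0 : ℝ) < ∑ l ∈ Finset.range (k + 1), ((1 : ℝ) + (l : ℝ)) ^ q := by
    refine Finset.sum_pos (fun l _ => ?_) ⟨0, Finset.mem_range.mpr (Nat.succ_pos k)⟩
    positivity
  -- reduce division
  rw [div_le_iff₀ (by positivity)]
  have key : η ^ 2 * ((1 : ℝ) + (k : ℝ)) ^ (3 * (p : ℝ) - 1)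
      ≤ η * (3 * (p : ℝ) + 1) / 2 * ((1 : ℝ) + (k : ℝ)) ^ (3 * ((p : ℝ) - 1) / 2) *
        (η * (((1 : ℝ) + (k : ℝ)) ^ (q + 1) / (q + 1))) := by
    have e1 : (3 * (p : ℝ) - 1) = (3 * ((p : ℝ) - 1) / 2) + (q + 1) := by rw [hq]; ring
    rw [e1, Real.rpow_add hx0]
    have hqp : q + 1 = (3 * (p : ℝ) + 1) / 2 := by rw [hq]; ring
    rw [hqp]
    have h2 : (3 * (p : ℝ) + 1) / 2 ≠ 0 := by positivity
    apply le_of_eq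
    field_simp
  calc η ^ 2 * ((1 : ℝ) + (k : ℝ)) ^ (3 * (p : ℝ) - 1)
      ≤ η * (3 * (p : ℝ) + 1) / 2 * ((1 : ℝ) + (k : ℝ)) ^ (3 * ((p : ℝ) - 1) / 2) *
        (η * (((1 : ℝ) + (k : ℝ)) ^ (q + 1) / (q + 1))) := key
    _ ≤ _ := by
        apply mul_le_mul_of_nonneg_left
        · exact mul_le_mul_of_nonneg_left hS (le_of_lt hη)
        · positivity
end

section
/- Let f : ℝ^d → ℝ be convex and differentiable with minimum f* attained at x*. Let K ≥ 1, let σ ∈ [0,1], and let the sequences of the A-HPE framework be given: positive reals η_0,…,η_{K−1}, β_k = β_{k−1} + η_k with β_{−1} = 0, λ_k = η_k²/β_k, α_k = η_k/β_k, points x^0 = x_f^0, and for each k points x_f^{k+1} satisfying ‖∇f(x_f^{k+1}) + λ_k^{-1}(x_f^{k+1} − x_g^k)‖ ≤ σ λ_k^{-1}‖x_f^{k+1} − x_g^k‖ where x_g^k = α_k x^k + (1−α_k) x_f^k, and x^{k+1} = x^k − η_k ∇f(x_f^{k+1}). Then 2β_{K−1}(f(x_f^K) − f*) + (1−σ²)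 Σ_{k=0}^{K−1} α_k^{-2} ‖x_f^{k+1} − x_g^k‖² ≤ ‖x^0 − x*‖². -/
/-!
The potential `Φ k = B k * (f (xf k) - f xstar) + ‖x k - xstar‖ ^ 2 / 2`, with
`B k = η 0 + ⋯ + η (k - 1)` (so that `B (k + 1) = β k`), drops at step `k` by at least
`(1 - σ ^ 2) / 2 * α k⁻¹ ^ 2 * ‖u‖ ^ 2`, where `u = xf (k + 1) - xg k` and `g = ∇f (xf (k + 1))`.
Indeed, the first-order convexity inequalities at `xf (k + 1)` towards `xstar` and `xf k`, weighted
by `η k` and `B k`, combine with the expansion of `‖x (k + 1) - xstar‖ ^ 2` into an increase of at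
most `β k * ⟪g, u⟫ + η k ^ 2 * ‖g‖ ^ 2 / 2`, and squaring the inexactness condition bounds this by
`-(1 - σ ^ 2) / 2 * (η k / lam k) ^ 2 * ‖u‖ ^ 2`, where `η k / lam k = α k⁻¹`. Telescoping the
decrease from `Φ 0 = ‖x 0 - xstar‖ ^ 2 / 2` gives the bound.
-/

open Finset

theorem ConvexOn.add_fderiv_sub_le {F : Type*} [NormedAddCommGroup F] [NormedSpace ℝ F]
    {s : Set F} {f : F → ℝ} {f' : F →L[ℝ] ℝ} {a b : F}
    (hf : ConvexOn ℝ s f) (ha : a ∈ s) (hb : b ∈ s) (hfa : HasFDerivAt f f' a) :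
    f a + f' (b - a) ≤ f b := by
  set φ : ℝ →ᵃ[ℝ] F := AffineMap.lineMap a b
  have hφ0 : φ 0 = a := AffineMap.lineMap_apply_zero a b
  have hφ1 : φ 1 = b := AffineMap.lineMap_apply_one a b
  have hline : ConvexOn ℝ (φ ⁻¹' s) (f ∘ φ) := hf.comp_affineMap φ
  have hderiv : HasDerivAt (f ∘ φ) (f' (b - a)) 0 := by
    refine HasFDerivAt.comp_hasDerivAt (0 : ℝ) ?_ AffineMap.hasDerivAt_lineMap
    simpa [hφ0] using hfa
  have hslope := hline.le_slope_of_hasDerivAt (by simpa [hφ0] using ha)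
    (by simpa [hφ1] using hb) one_pos hderiv
  rw [slope_def_field, Function.comp_apply, Function.comp_apply, hφ0, hφ1, sub_zero,
    div_one] at hslope
  linarith

theorem Finset.sum_range_add_le_of_succ_add_le {M : Type*} [AddCommGroup M] [PartialOrder M]
    [IsOrderedAddMonoid M] {a b : ℕ → M} {n : ℕ} (h : ∀ k < n, a (k + 1) + b k ≤ a k) :
    a n + ∑ k ∈ range n, b k ≤ a 0 := by
  have hsum : ∑ k ∈ range n, b k ≤ ∑ k ∈ range n, (a k - a (k + 1)) :=
    sum_le_sum fun k hk => le_sub_left_of_add_le (h k (mem_range.mp hk))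
  rw [sum_range_sub'] at hsum
  exact add_le_of_le_sub_left hsum

section InnerProductSpace

variable {E : Type*} [NormedAddCommGroup E] [InnerProductSpace ℝ E]

theorem ConvexOn.add_inner_gradient_sub_le [CompleteSpace E] {s : Set E} {f : E → ℝ} {a b : E}
    (hf : ConvexOn ℝ s f) (ha : a ∈ s) (hb : b ∈ s) (hfa : DifferentiableAt ℝ f a) :
    f a + inner ℝ (gradient f a) (b - a) ≤ f b := by
  simpa using hf.add_fderiv_sub_le ha hb hfa.hasGradientAt.hasFDerivAt

theorem norm_sq_add_two_mul_inner_le_of_norm_add_smul_le {g u : E} {c σ : ℝ}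
    (h : ‖g + c • u‖ ≤ σ * c * ‖u‖) :
    ‖g‖ ^ 2 + 2 * c * inner ℝ g u ≤ (σ ^ 2 - 1) * c ^ 2 * ‖u‖ ^ 2 := by
  have hsq := pow_le_pow_left₀ (norm_nonneg _) h 2
  rw [norm_add_sq_real, norm_smul, real_inner_smul_right, Real.norm_eq_abs, mul_pow,
    sq_abs] at hsq
  linarith

theorem ahpe_step_potential_le [CompleteSpace E] {f : E → ℝ} (hf : ConvexOn ℝ Set.univ f)
    {xstar x xf xg y : E} {B η σ : ℝ} (hB : 0 ≤ B) (hη : 0 < η) (hfy : DifferentiableAt ℝ f y)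
    (hxg : xg = (η / (B + η)) • x + (1 - η / (B + η)) • xf)
    (hinexact : ‖gradient f y + (η ^ 2 / (B + η))⁻¹ • (y - xg)‖ ≤
      σ * (η ^ 2 / (B + η))⁻¹ * ‖y - xg‖) :
    (B + η) * (f y - f xstar) + ‖x - η • gradient f y - xstar‖ ^ 2 / 2 +
        (1 - σ ^ 2) / 2 * ((η / (B + η))⁻¹ ^ 2 * ‖y - xg‖ ^ 2) ≤
      B * (f xf - f xstar) + ‖x - xstar‖ ^ 2 / 2 := by
  have hstar := hf.add_inner_gradient_sub_le (Set.mem_univ y) (Set.mem_univ xstar) hfy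
  have hprev := hf.add_inner_gradient_sub_le (Set.mem_univ y) (Set.mem_univ xf) hfy
  have hquad := norm_sq_add_two_mul_inner_le_of_norm_add_smul_le hinexact
  set g := gradient f y
  -- the extrapolation point `xg` is chosen exactly so that this holds
  have hcomb : η • (xstar - y) + B • (xf - y) = -((B + η) • (y - xg) + η • (x - xstar)) := by
    rw [hxg]
    match_scalars <;> field_simp <;> ring
  have hinner := congrArg (inner ℝ g) hcomb
  simp only [inner_add_right, inner_neg_right, real_inner_smul_right] at hinner
  have hnorm : ‖x - η • g - xstar‖ ^ 2 =
      ‖x - xstar‖ ^ 2 - 2 * η * inner ℝ g (x - xstar) + η ^ 2 * ‖g‖ ^ 2 := by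
    rw [show x - η • g - xstar = (x - xstar) - η • g by abel, norm_sub_sq_real,
      real_inner_smul_right, norm_smul, Real.norm_eq_abs, mul_pow, sq_abs, real_inner_comm]
    ring
  set c := (η ^ 2 / (B + η))⁻¹
  have hc : c * η ^ 2 = B + η := by simp only [c]; field_simp
  have hc' : (η / (B + η))⁻¹ = c * η := by simp only [c]; field_simp
  rw [hnorm, hc']
  clear_value c g
  linear_combination η * hstar + B * hprev + η ^ 2 / 2 * hquad - hinner - inner ℝ g (y - xg) * hc

end InnerProductSpace

theorem ahpe_convergence_general {d : ℕ}
    (f : EuclideanSpace ℝ (Fin d) → ℝ)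
    (hconv : ConvexOn ℝ Set.univ f) (hdiff : Differentiable ℝ f)
    (xstar : EuclideanSpace ℝ (Fin d))
    (K : ℕ) (hK : 1 ≤ K) (σ : ℝ)
    (η β lam α : ℕ → ℝ)
    (hηpos : ∀ k, 0 < η k)
    (hβ : ∀ k, β k = ∑ l ∈ Finset.range (k + 1), η l)
    (hlam : ∀ k, lam k = (η k) ^ 2 / β k)
    (hα : ∀ k, α k = η k / β k)
    (x xf xg : ℕ → EuclideanSpace ℝ (Fin d))
    (hxg : ∀ k < K, xg k = α k • x k + (1 - α k) • xf k)
    (hinexact : ∀ k < K,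
      ‖gradient f (xf (k + 1)) + (lam k)⁻¹ • (xf (k + 1) - xg k)‖ ≤
        σ * (lam k)⁻¹ * ‖xf (k + 1) - xg k‖)
    (hstep : ∀ k < K, x (k + 1) = x k - η k • gradient f (xf (k + 1))) :
    2 * β (K - 1) * (f (xf K) - f xstar) +
        (1 - σ ^ 2) * ∑ k ∈ Finset.range K, ((α k)⁻¹) ^ 2 * ‖xf (k + 1) - xg k‖ ^ 2 ≤
      ‖x 0 - xstar‖ ^ 2 := by
  set B : ℕ → ℝ := fun n => ∑ l ∈ range n, η l
  have hβB : ∀ k, β k = B k + η k := fun k => by rw [hβ, sum_range_succ]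
  set Φ : ℕ → ℝ := fun n => B n * (f (xf n) - f xstar) + ‖x n - xstar‖ ^ 2 / 2
  have hdecrease : ∀ k < K,
      Φ (k + 1) + (1 - σ ^ 2) / 2 * ((α k)⁻¹ ^ 2 * ‖xf (k + 1) - xg k‖ ^ 2) ≤ Φ k := by
    intro k hk
    have hB : B (k + 1) = B k + η k := sum_range_succ η k
    simp only [Φ, hB, hstep k hk, hα k, hβB k]
    refine ahpe_step_potential_le hconv (sum_nonneg fun l _ => (hηpos l).le) (hηpos k)
      (hdiff _) (by rw [hxg k hk, hα k, hβB k]) ?_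
    simpa only [hlam k, hβB k] using hinexact k hk
  have htelescope := sum_range_add_le_of_succ_add_le hdecrease
  have hBK : B K = β (K - 1) := by rw [hβ, Nat.sub_add_cancel hK]
  simp only [Φ, hBK, B, range_zero, sum_empty, zero_mul, zero_add, ← mul_sum] at htelescope
  linarith [sq_nonneg ‖x K - xstar‖]

theorem ahpe_convergence {d : ℕ}
    (f : EuclideanSpace ℝ (Fin d) → ℝ)
    (hconv : ConvexOn ℝ Set.univ f) (hdiff : Differentiable ℝ f)
    (xstar : EuclideanSpace ℝ (Fin d)) (hmin : IsMinOn f Set.univ xstar)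
    (K : ℕ) (hK : 1 ≤ K) (σ : ℝ) (hσ : σ ∈ Set.Icc (0 : ℝ) 1)
    (η β lam α : ℕ → ℝ)
    (hηpos : ∀ k, 0 < η k)
    (hβ : ∀ k, β k = ∑ l ∈ Finset.range (k + 1), η l)
    (hlam : ∀ k, lam k = (η k) ^ 2 / β k)
    (hα : ∀ k, α k = η k / β k)
    (x xf xg : ℕ → EuclideanSpace ℝ (Fin d))
    (hx0 : x 0 = xf 0)
    (hxg : ∀ k < K, xg k = α k • x k + (1 - α k) • xf k)
    (hinexact : ∀ k < K,
      ‖gradient f (xf (k + 1)) + (lam k)⁻¹ • (xf (k + 1) - xg k)‖ ≤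
        σ * (lam k)⁻¹ * ‖xf (k + 1) - xg k‖)
    (hstep : ∀ k < K, x (k + 1) = x k - η k • gradient f (xf (k + 1))) :
    2 * β (K - 1) * (f (xf K) - f xstar) +
        (1 - σ ^ 2) * ∑ k ∈ Finset.range K, ((α k)⁻¹) ^ 2 * ‖xf (k + 1) - xg k‖ ^ 2 ≤
      ‖x 0 - xstar‖ ^ 2 :=
  ahpe_convergence_general f hconv hdiff xstar K hK σ η β lam α hηpos hβ hlam hα x xf xg hxg
    hinexact hstep
end

section
/- Under the assumptions of the A-HPE framework (Theorem 3.1) with σ ∈ [0,1), one additionally has 2β_{K−1}(f(x_f^K) − f*) + ((1−σ)/(1+σ)) Σ_{k=0}^{K−1} α_k^{-2} ‖x_g^k − x^{k,*}‖² ≤ ‖x^0 − x*‖², where x^{k,*} is the unique minimizer of A_{λ_k}(x; x_g^k) = f(x) + (1/(2λ_k))‖x − x_g^k‖². -/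
/-!
Along the iteration the potential `Φ k = 2 β_{k-1} (f (x_f^k) - f x*) + ‖x^k - x*‖²` drops by at
least the `k`-th summand. Convexity of `f` at `y = x_f^{k+1}` bounds `Φ (k+1) - Φ k` by
`2 β_k ⟪∇f y, y - x_g^k⟫ + η_k² ‖∇f y‖²`, and the inexactness criterion makes this at most
`-(1 - σ²) α_k⁻² ‖y - x_g^k‖²`. Strong convexity of `A_λ` puts the exact proximal point within
`σ ‖y - x_g^k‖` of `y`, so `‖x_g^k - x^{k,*}‖ ≤ (1 + σ) ‖y - x_g^k‖`, and the sum telescopes.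
-/

open Finset

open RealInnerProductSpace Set

section

variable {E : Type*} [NormedAddCommGroup E] [InnerProductSpace ℝ E] [CompleteSpace E] {f : E → ℝ}

/-- The function `A_λ(·; g)` of the paper, with `λ = L`. -/
noncomputable def proxObjective (f : E → ℝ) (L : ℝ) (g w : E) : ℝ :=
  f w + 1 / (2 * L) * ‖w - g‖ ^ 2

theorem ConvexOn.add_inner_gradient_le (hf : ConvexOn ℝ univ f) {y : E}
    (hd : DifferentiableAt ℝ f y) (z : E) : f y + ⟪gradient f y, z - y⟫ ≤ f z := by
  let ℓ : ℝ →ᵃ[ℝ] E := AffineMap.lineMap y z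
  have hline : HasDerivAt (f ∘ ℓ) ⟪gradient f y, z - y⟫ 0 := by
    have h := hd.hasFDerivAt.comp_hasDerivAt_of_eq (0 : ℝ) AffineMap.hasDerivAt_lineMap
      (AffineMap.lineMap_apply_zero y z).symm
    simpa [inner_gradient_left] using h
  have h := (hf.comp_affineMap ℓ).le_slope_of_hasDerivAt trivial trivial one_pos hline
  have hslope : slope (f ∘ ℓ) 0 1 = f z - f y := by simp [slope, ℓ]
  linarith

theorem ConvexOn.inner_gradient_sub_gradient_nonneg (hf : ConvexOn ℝ univ f) {x y : E}
    (hx : DifferentiableAt ℝ f x) (hy : DifferentiableAt ℝ f y) :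
    0 ≤ ⟪gradient f x - gradient f y, x - y⟫ := by
  have h₁ := hf.add_inner_gradient_le hx y
  have h₂ := hf.add_inner_gradient_le hy x
  rw [← neg_sub x y, inner_neg_right] at h₁
  rw [inner_sub_left]
  linarith

theorem gradient_eq_of_isMinOn_proxObjective {L : ℝ} {g s : E} (hd : DifferentiableAt ℝ f s)
    (hs : IsMinOn (proxObjective f L g) univ s) : gradient f s = L⁻¹ • (g - s) := by
  have hA : HasFDerivAt (proxObjective f L g) (fderiv ℝ f s +
      (1 / (2 * L)) • (2 • (innerSL ℝ (s - g)).comp (ContinuousLinearMap.id ℝ E))) s :=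
    hd.hasFDerivAt.add ((((hasFDerivAt_id s).sub_const g).norm_sq).const_smul (1 / (2 * L)))
  set w := gradient f s - L⁻¹ • (g - s)
  have h0 := congrArg (fun φ => φ w) ((hs.isLocalMin Filter.univ_mem).hasFDerivAt_eq_zero hA)
  simp only [add_apply, smul_apply, ContinuousLinearMap.comp_apply, ContinuousLinearMap.id_apply,
    innerSL_apply_apply, zero_apply, ← inner_gradient_left, smul_eq_mul, nsmul_eq_mul] at h0
  have hw : ⟪w, w⟫ = 0 := by
    rw [inner_sub_left, real_inner_smul_left, ← neg_sub s g, inner_neg_left]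
    linear_combination h0
  exact sub_eq_zero.mp (inner_self_eq_zero.mp hw)

theorem norm_sub_le_of_isMinOn_proxObjective (hf : ConvexOn ℝ univ f) (hdiff : Differentiable ℝ f)
    {L : ℝ} (hL : 0 < L) {g s : E} (hs : IsMinOn (proxObjective f L g) univ s) (y : E) :
    ‖y - s‖ ≤ L * ‖gradient f y + L⁻¹ • (y - g)‖ := by
  set e := gradient f y + L⁻¹ • (y - g)
  have he : e = (gradient f y - gradient f s) + L⁻¹ • (y - s) := by
    rw [gradient_eq_of_isMinOn_proxObjective (hdiff s) hs]
    module
  have hmono := hf.inner_gradient_sub_gradient_nonneg (hdiff y) (hdiff s)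
  have key : L⁻¹ * ‖y - s‖ * ‖y - s‖ ≤ ‖e‖ * ‖y - s‖ :=
    calc L⁻¹ * ‖y - s‖ * ‖y - s‖
        ≤ ⟪gradient f y - gradient f s, y - s⟫ + L⁻¹ * ‖y - s‖ ^ 2 := by
          rw [mul_assoc, ← sq]
          linarith
      _ = ⟪e, y - s⟫ := by
        rw [he, inner_add_left, real_inner_smul_left, real_inner_self_eq_norm_sq]
      _ ≤ ‖e‖ * ‖y - s‖ := real_inner_le_norm e (y - s)
  rcases (norm_nonneg (y - s)).eq_or_lt with h0 | hpos
  · rw [← h0]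
    positivity
  · exact (inv_mul_le_iff₀ hL).mp (le_of_mul_le_mul_right key hpos)

theorem inexact_prox_step_bound (hf : ConvexOn ℝ univ f) (hdiff : Differentiable ℝ f)
    {σ L : ℝ} (hσ : σ ∈ Ico (0 : ℝ) 1) (hL : 0 < L) {g y s : E}
    (hs : IsMinOn (proxObjective f L g) univ s)
    (hy : ‖gradient f y + L⁻¹ • (y - g)‖ ≤ σ * L⁻¹ * ‖y - g‖) :
    L ^ 2 * ‖gradient f y‖ ^ 2 + 2 * L * ⟪gradient f y, y - g⟫ +
      (1 - σ) / (1 + σ) * ‖g - s‖ ^ 2 ≤ 0 := by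
  obtain ⟨hσ0, hσ1⟩ := hσ
  set v := gradient f y
  set u := y - g
  have hcross : L ^ 2 * ‖v‖ ^ 2 + 2 * L * ⟪v, u⟫ ≤ (σ ^ 2 - 1) * ‖u‖ ^ 2 := by
    have hsq := mul_le_mul_of_nonneg_left (pow_le_pow_left₀ (norm_nonneg _) hy 2)
      (sq_nonneg L)
    rw [norm_add_sq_real, norm_smul, real_inner_smul_right,
      Real.norm_of_nonneg (inv_nonneg.2 hL.le)] at hsq
    field_simp at hsq
    linarith
  have hprox : ‖y - s‖ ≤ σ * ‖u‖ :=
    calc ‖y - s‖ ≤ L * ‖v + L⁻¹ • u‖ := norm_sub_le_of_isMinOn_proxObjective hf hdiff hL hs y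
      _ ≤ L * (σ * L⁻¹ * ‖u‖) := by gcongr
      _ = σ * ‖u‖ := by field_simp
  have hgs : ‖g - s‖ ≤ (1 + σ) * ‖u‖ := by
    have := norm_sub_le_norm_sub_add_norm_sub g y s
    rw [norm_sub_rev g y] at this
    linarith
  have hcorr : (1 - σ) / (1 + σ) * ‖g - s‖ ^ 2 ≤ (1 - σ ^ 2) * ‖u‖ ^ 2 :=
    calc (1 - σ) / (1 + σ) * ‖g - s‖ ^ 2 ≤ (1 - σ) / (1 + σ) * ((1 + σ) * ‖u‖) ^ 2 := by
          gcongr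
      _ = (1 - σ ^ 2) * ‖u‖ ^ 2 := by field_simp; ring
  linarith

theorem lyapunov_descent (hf : ConvexOn ℝ univ f) {y : E} (hd : DifferentiableAt ℝ f y) (z : E)
    {η B : ℝ} (hη : 0 ≤ η) (hB : 0 ≤ B) {x xf g : E} (hg : (B + η) • g = η • x + B • xf) :
    2 * (B + η) * (f y - f z) + ‖x - η • gradient f y - z‖ ^ 2 ≤
      2 * B * (f xf - f z) + ‖x - z‖ ^ 2 +
        (2 * (B + η) * ⟪gradient f y, y - g⟫ + η ^ 2 * ‖gradient f y‖ ^ 2) := by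
  set v := gradient f y
  have hxf := hf.add_inner_gradient_le hd xf
  have hz := hf.add_inner_gradient_le hd z
  have hnorm : ‖x - η • v - z‖ ^ 2 = ‖x - z‖ ^ 2 - 2 * η * ⟪v, x - z⟫ + η ^ 2 * ‖v‖ ^ 2 := by
    rw [show x - η • v - z = (x - z) - η • v by abel, norm_sub_sq_real, real_inner_smul_right,
      norm_smul, mul_pow, Real.norm_eq_abs, sq_abs, real_inner_comm]
    ring
  have hcomb : (B + η) • (y - g) = B • (y - xf) + η • (y - x) := by
    rw [smul_sub, hg]
    module
  have hinner := congrArg (fun w => ⟪v, w⟫) hcomb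
  simp only [inner_add_right, real_inner_smul_right, inner_sub_right] at hinner hxf hz hnorm ⊢
  linarith [mul_nonneg hB (sub_nonneg.2 hxf), mul_nonneg hη (sub_nonneg.2 hz)]

theorem ahpe_step_estimate (hf : ConvexOn ℝ univ f) (hdiff : Differentiable ℝ f) (z : E)
    {σ η B β L α : ℝ} (hσ : σ ∈ Ico (0 : ℝ) 1) (hη : 0 < η) (hB : 0 ≤ B) (hβ : β = B + η)
    (hL : L = η ^ 2 / β) (hα : α = η / β) {x xf g y s : E}
    (hg : g = α • x + (1 - α) • xf) (hs : IsMinOn (proxObjective f L g) univ s)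
    (hy : ‖gradient f y + L⁻¹ • (y - g)‖ ≤ σ * L⁻¹ * ‖y - g‖) :
    (1 - σ) / (1 + σ) * (α⁻¹ ^ 2 * ‖g - s‖ ^ 2) +
        (2 * β * (f y - f z) + ‖x - η • gradient f y - z‖ ^ 2) ≤
      2 * B * (f xf - f z) + ‖x - z‖ ^ 2 := by
  have hβpos : 0 < β := by linarith
  have hLpos : 0 < L := by rw [hL]; positivity
  have hg' : (B + η) • g = η • x + B • xf := by
    rw [hg, hα, ← hβ, smul_add, smul_smul, smul_smul, mul_div_cancel₀ _ hβpos.ne',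
      show β * (1 - η / β) = B by field_simp; linarith]
  have hdescent := lyapunov_descent hf (hdiff y) z hη.le hB hg'
  have hbound := mul_le_mul_of_nonneg_left (inexact_prox_step_bound hf hdiff hσ hLpos hs hy)
    (div_pos hβpos hLpos).le
  have hscale : β / L * (L ^ 2 * ‖gradient f y‖ ^ 2 + 2 * L * ⟪gradient f y, y - g⟫ +
      (1 - σ) / (1 + σ) * ‖g - s‖ ^ 2) = η ^ 2 * ‖gradient f y‖ ^ 2 +
      2 * β * ⟪gradient f y, y - g⟫ + (1 - σ) / (1 + σ) * (α⁻¹ ^ 2 * ‖g - s‖ ^ 2) := by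
    rw [hL, hα]
    field_simp
  rw [← hβ] at hdescent
  linarith

end

theorem ahpe_convergence_modified_general {d : ℕ}
    (f : EuclideanSpace ℝ (Fin d) → ℝ)
    (hconv : ConvexOn ℝ Set.univ f) (hdiff : Differentiable ℝ f)
    (xstar : EuclideanSpace ℝ (Fin d))
    (K : ℕ) (hK : 1 ≤ K) (σ : ℝ) (hσ : σ ∈ Set.Ico (0 : ℝ) 1)
    (η β lam α : ℕ → ℝ)
    (hηpos : ∀ k, 0 < η k)
    (hβ : ∀ k, β k = ∑ l ∈ Finset.range (k + 1), η l)
    (hlam : ∀ k, lam k = (η k) ^ 2 / β k)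
    (hα : ∀ k, α k = η k / β k)
    (x xf xg xs : ℕ → EuclideanSpace ℝ (Fin d))
    (hxg : ∀ k < K, xg k = α k • x k + (1 - α k) • xf k)
    (hxs : ∀ k < K,
      IsMinOn (fun y => f y + (1 / (2 * lam k)) * ‖y - xg k‖ ^ 2) Set.univ (xs k))
    (hinexact : ∀ k < K,
      ‖gradient f (xf (k + 1)) + (lam k)⁻¹ • (xf (k + 1) - xg k)‖ ≤
        σ * (lam k)⁻¹ * ‖xf (k + 1) - xg k‖)
    (hstep : ∀ k < K, x (k + 1) = x k - η k • gradient f (xf (k + 1))) :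
    2 * β (K - 1) * (f (xf K) - f xstar) +
        ((1 - σ) / (1 + σ)) *
          ∑ k ∈ Finset.range K, ((α k)⁻¹) ^ 2 * ‖xg k - xs k‖ ^ 2 ≤
      ‖x 0 - xstar‖ ^ 2 := by
  set B : ℕ → ℝ := fun k => ∑ l ∈ range k, η l
  have hβB : ∀ k, β k = B k + η k := fun k => by rw [hβ, sum_range_succ]
  set Φ : ℕ → ℝ := fun k => 2 * B k * (f (xf k) - f xstar) + ‖x k - xstar‖ ^ 2
  have hdecrease : ∀ k < K,
      (1 - σ) / (1 + σ) * ((α k)⁻¹ ^ 2 * ‖xg k - xs k‖ ^ 2) ≤ Φ k - Φ (k + 1) := by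
    intro k hk
    have h := ahpe_step_estimate hconv hdiff xstar hσ (hηpos k)
      (sum_nonneg fun l _ => (hηpos l).le) (hβB k) (hlam k) (hα k) (hxg k hk) (hxs k hk)
      (hinexact k hk)
    simp only [Φ, B, hstep k hk]
    rw [← hβ k]
    linarith
  have hsum :=
    (sum_le_sum fun k hk => hdecrease k (mem_range.1 hk)).trans_eq (sum_range_sub' Φ K)
  have hΦK : 2 * β (K - 1) * (f (xf K) - f xstar) ≤ Φ K := by
    simp only [Φ, B, hβ, Nat.sub_add_cancel hK]
    exact le_add_of_nonneg_right (sq_nonneg _)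
  simp only [Φ, B, Finset.range_zero, sum_empty] at hsum
  rw [mul_sum]
  linarith

theorem ahpe_convergence_modified {d : ℕ}
    (f : EuclideanSpace ℝ (Fin d) → ℝ)
    (hconv : ConvexOn ℝ Set.univ f) (hdiff : Differentiable ℝ f)
    (xstar : EuclideanSpace ℝ (Fin d)) (hmin : IsMinOn f Set.univ xstar)
    (K : ℕ) (hK : 1 ≤ K) (σ : ℝ) (hσ : σ ∈ Set.Ico (0 : ℝ) 1)
    (η β lam α : ℕ → ℝ)
    (hηpos : ∀ k, 0 < η k)
    (hβ : ∀ k, β k = ∑ l ∈ Finset.range (k + 1), η l)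
    (hlam : ∀ k, lam k = (η k) ^ 2 / β k)
    (hα : ∀ k, α k = η k / β k)
    (x xf xg xs : ℕ → EuclideanSpace ℝ (Fin d))
    (hx0 : x 0 = xf 0)
    (hxg : ∀ k < K, xg k = α k • x k + (1 - α k) • xf k)
    (hxs : ∀ k < K,
      IsMinOn (fun y => f y + (1 / (2 * lam k)) * ‖y - xg k‖ ^ 2) Set.univ (xs k))
    (hinexact : ∀ k < K,
      ‖gradient f (xf (k + 1)) + (lam k)⁻¹ • (xf (k + 1) - xg k)‖ ≤
        σ * (lam k)⁻¹ * ‖xf (k + 1) - xg k‖)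
    (hstep : ∀ k < K, x (k + 1) = x k - η k • gradient f (xf (k + 1))) :
    2 * β (K - 1) * (f (xf K) - f xstar) +
        ((1 - σ) / (1 + σ)) *
          ∑ k ∈ Finset.range K, ((α k)⁻¹) ^ 2 * ‖xg k - xs k‖ ^ 2 ≤
      ‖x 0 - xstar‖ ^ 2 :=
  ahpe_convergence_modified_general f hconv hdiff xstar K hK σ hσ η β lam α hηpos hβ hlam hα x xf xg
    xs hxg hxs hinexact hstep
end

section
/- Let g : ℝ^d → ℝ be convex, p-times continuously differentiable with L_p-Lipschitz p-th derivatives, M ≥ L_p, and let x⁺ be the minimizer of x ↦ Φ^p_g(x; z) + (pM/(p+1)!)‖x − z‖^{p+1}. Then ‖∇g(x⁺)‖ ≤ ((pM + L_p)/p!)‖x⁺ − z‖^p. -/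
open Finset

/-- The `p`-th order Taylor polynomial of `g` at `z`, evaluated at `x`. -/
noncomputable def taylorApprox {d : ℕ} (p : ℕ) (g : EuclideanSpace ℝ (Fin d) → ℝ)
    (z x : EuclideanSpace ℝ (Fin d)) : ℝ :=
  ∑ i ∈ Finset.range (p + 1),
    (1 / (Nat.factorial i : ℝ)) * iteratedFDeriv ℝ i g z (fun _ => x - z)

/-!
Write `u = x⁺ - z` and `Φ = Φᵖ_g(·; z)`; the bound on `Dg(x⁺) v` is the sum of two estimates.
Taylor's theorem for the curves `t ↦ D^{k+1}g(z + t u)[u, …, u, v]` gives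
`|Dg(x⁺) v - DΦ(x⁺) v| ≤ (L/p!) ‖u‖ᵖ ‖v‖`. Along the ray `x⁺ + s v` the objective is dominated
by `Φ(x⁺ + s v) + (pM/(p+1)!) (‖u‖ + s ‖v‖)^(p+1)`, with equality at `s = 0`, so this smooth
majorant has nonnegative right derivative there: `DΦ(x⁺) v ≥ -(pM/p!) ‖u‖ᵖ ‖v‖`, and the same
for `-v`. This replaces the first-order optimality condition without differentiating the norm.
-/

open scoped Nat

theorem Fin.snoc_const_self {α : Type*} {k : ℕ} (u : α) :
    (Fin.snoc (fun _ : Fin k => u) u : Fin (k + 1) → α) = fun _ => u := by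
  funext j
  refine Fin.lastCases ?_ (fun i => ?_) j <;> simp

theorem Fin.cons_snoc_const {α : Type*} {k : ℕ} (u v : α) :
    (Fin.cons u (Fin.snoc (fun _ : Fin k => u) v) : Fin (k + 2) → α)
      = Fin.snoc (fun _ => u) v := by
  rw [Fin.cons_snoc_eq_snoc_cons]
  congr
  exact Fin.cons_self_tail (fun _ => u)

theorem Fin.update_const_last {α : Type*} {k : ℕ} (u v : α) :
    Function.update (fun _ : Fin (k + 1) => u) (Fin.last k) v = Fin.snoc (fun _ => u) v := by
  rw [← Fin.snoc_const_self u, Fin.update_snoc_last]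

namespace ContinuousMultilinearMap

variable {E F : Type*} [NormedAddCommGroup E] [NormedSpace ℝ E]
  [NormedAddCommGroup F] [NormedSpace ℝ F]

theorem hasDerivAt_apply_const_add_smul {n : ℕ}
    (A : ContinuousMultilinearMap ℝ (fun _ : Fin n => E) F) (y v : E) :
    HasDerivAt (fun s : ℝ => A (fun _ => y + s • v))
      (∑ j, A (Function.update (fun _ => y) j v)) 0 := by
  have hline : HasDerivAt (fun s : ℝ => fun _ : Fin n => y + s • v) (fun _ => v) 0 :=
    hasDerivAt_pi.2 fun _ => by simpa using ((hasDerivAt_id (0 : ℝ)).smul_const v).const_add y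
  have h := (A.hasFDerivAt (fun _ => y)).comp_hasDerivAt_of_eq (0 : ℝ) hline (by simp)
  simpa [Function.comp_def, linearDeriv_apply] using h

theorem norm_apply_snoc_const_le {n : ℕ}
    (A : ContinuousMultilinearMap ℝ (fun _ : Fin (n + 1) => E) F) (u v : E) :
    ‖A (Fin.snoc (fun _ => u) v)‖ ≤ ‖A‖ * (‖u‖ ^ n * ‖v‖) := by
  simpa [Fin.prod_univ_castSucc] using A.le_opNorm (Fin.snoc (fun _ => u) v)

end ContinuousMultilinearMap

section Symmetry

universe u

-- One universe for both spaces, so that the induction below can pass from `f` to `fderiv ℝ f`.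
variable {E F : Type u} [NormedAddCommGroup E] [NormedSpace ℝ E]
  [NormedAddCommGroup F] [NormedSpace ℝ F]

theorem ContDiff.iteratedFDeriv_snoc_snoc_comm {f : E → F} {i : ℕ} (hf : ContDiff ℝ (i + 2) f)
    (x : E) (m : Fin i → E) (v w : E) :
    iteratedFDeriv ℝ (i + 2) f x (Fin.snoc (Fin.snoc m v) w)
      = iteratedFDeriv ℝ (i + 2) f x (Fin.snoc (Fin.snoc m w) v) := by
  have hflip : ContinuousLinearMap.flipₗᵢ ℝ E E F ∘ fderiv ℝ (fderiv ℝ f)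
      = fderiv ℝ (fderiv ℝ f) := by
    funext y
    ext a b
    exact (hf.contDiffAt (x := y)).isSymmSndFDerivAt (by simp) b a
  have hcomp := ContinuousLinearEquiv.iteratedFDeriv_comp_left (𝕜 := ℝ)
    (G := E →L[ℝ] E →L[ℝ] F) (ContinuousLinearMap.flipₗᵢ ℝ E E F).toContinuousLinearEquiv
    (f := fderiv ℝ (fderiv ℝ f)) (x := x) (i := i)
  rw [LinearIsometryEquiv.coe_toContinuousLinearEquiv, hflip] at hcomp
  simp only [iteratedFDeriv_succ_apply_right, Fin.init_snoc, Fin.snoc_last]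
  conv_lhs => rw [hcomp]
  rfl

theorem ContDiff.iteratedFDeriv_update_const_eq_snoc {f : E → F} {i : ℕ}
    (hf : ContDiff ℝ (i + 1) f) (x u v : E) (j : Fin (i + 1)) :
    iteratedFDeriv ℝ (i + 1) f x (Function.update (fun _ => u) j v)
      = iteratedFDeriv ℝ (i + 1) f x (Fin.snoc (fun _ => u) v) := by
  induction i generalizing F with
  | zero => rw [Subsingleton.elim (α := Fin 1) j (Fin.last 0), Fin.update_const_last]
  | succ i ih =>
    refine Fin.lastCases (by rw [Fin.update_const_last]) (fun j => ?_) j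
    have hdf : ContDiff ℝ (i + 1) (fderiv ℝ f) := hf.fderiv_right (by norm_cast)
    calc iteratedFDeriv ℝ (i + 2) f x (Function.update (fun _ => u) j.castSucc v)
        = iteratedFDeriv ℝ (i + 1) (fderiv ℝ f) x (Function.update (fun _ => u) j v) u := by
          rw [iteratedFDeriv_succ_apply_right, Fin.init_update_castSucc,
            Function.update_of_ne (Fin.castSucc_lt_last j).ne']
          rfl
      _ = iteratedFDeriv ℝ (i + 1) (fderiv ℝ f) x (Fin.snoc (fun _ => u) v) u := by
          rw [ih hdf j]
      _ = iteratedFDeriv ℝ (i + 2) f x (Fin.snoc (Fin.snoc (fun _ => u) v) u) := by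
          rw [iteratedFDeriv_succ_apply_right (n := i + 1), Fin.init_snoc, Fin.snoc_last]
      _ = iteratedFDeriv ℝ (i + 2) f x (Fin.snoc (fun _ => u) v) := by
          rw [hf.iteratedFDeriv_snoc_snoc_comm, Fin.snoc_const_self]

end Symmetry

section TaylorRemainder

variable {Y : Type*} [NormedAddCommGroup Y] [NormedSpace ℝ Y]

theorem hasDerivAt_pow_succ_div_factorial (n : ℕ) (t : ℝ) :
    HasDerivAt (fun t : ℝ => t ^ (n + 1) / (n + 1)!) (t ^ n / n !) t := by
  refine ((hasDerivAt_pow (n + 1) t).div_const ((n + 1)! : ℝ)).congr_deriv ?_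
  rw [Nat.factorial_succ]
  push_cast
  field_simp

theorem hasDerivAt_sum_pow_div_factorial_smul (y : ℕ → Y) (n : ℕ) (t : ℝ) :
    HasDerivAt (fun t : ℝ => ∑ k ∈ range (n + 1), (t ^ k / k !) • y k)
      (∑ k ∈ range n, (t ^ k / k !) • y (k + 1)) t := by
  have h := (HasDerivAt.fun_sum fun k (_ : k ∈ range n) =>
    (hasDerivAt_pow_succ_div_factorial k t).smul_const (y (k + 1))).add_const (y 0)
  exact h.congr_of_eventuallyEq (Filter.Eventually.of_forall fun s => by simp [sum_range_succ'])

theorem norm_sub_taylor_sum_le_of_hasDerivAt (n : ℕ) (c : ℕ → ℝ → Y) (C : ℝ)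
    (hc : ∀ k < n, ∀ t, HasDerivAt (c k) (c (k + 1) t) t)
    (hC : ∀ t ∈ Set.Icc (0 : ℝ) 1, ‖c n t - c n 0‖ ≤ C * t) :
    ∀ t ∈ Set.Icc (0 : ℝ) 1,
      ‖c 0 t - ∑ k ∈ range (n + 1), (t ^ k / k !) • c k 0‖ ≤ C * (t ^ (n + 1) / (n + 1)!) := by
  induction n generalizing c with
  | zero => simpa using hC
  | succ n ih =>
    have hderiv (t : ℝ) := (hc 0 n.succ_pos t).sub
      (hasDerivAt_sum_pow_div_factorial_smul (fun k => c k 0) (n + 1) t)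
    refine image_norm_le_of_norm_deriv_right_le_deriv_boundary
      (fun t _ => (hderiv t).continuousAt.continuousWithinAt)
      (fun t _ => (hderiv t).hasDerivWithinAt) (by simp [sum_range_succ'])
      (fun t => (hasDerivAt_pow_succ_div_factorial (n + 1) t).const_mul C) fun t ht => ?_
    exact ih (fun k => c (k + 1)) (fun k hk => hc (k + 1) (by omega)) hC t
      (Set.Ico_subset_Icc_self ht)

end TaylorRemainder

section GradientTaylor

variable {E F : Type*} [NormedAddCommGroup E] [NormedSpace ℝ E]
  [NormedAddCommGroup F] [NormedSpace ℝ F]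

/-- `∇Φᵖ_g(x; z)` applied to `v`. -/
noncomputable def taylorApproxDeriv (p : ℕ) (g : E → F) (z x v : E) : F :=
  ∑ k ∈ range p, (k ! : ℝ)⁻¹ • iteratedFDeriv ℝ (k + 1) g z (Fin.snoc (fun _ => x - z) v)

theorem ContDiff.hasDerivAt_iteratedFDeriv_apply_line {f : E → F} {n : ℕ}
    (hf : ContDiff ℝ (n + 1) f) (z u : E) (m : Fin n → E) (t : ℝ) :
    HasDerivAt (fun t : ℝ => iteratedFDeriv ℝ n f (z + t • u) m)
      (iteratedFDeriv ℝ (n + 1) f (z + t • u) (Fin.cons u m)) t := by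
  have hline : HasDerivAt (fun t : ℝ => z + t • u) u t := by
    simpa using ((hasDerivAt_id t).smul_const u).const_add z
  have hD := ((hf.differentiable_iteratedFDeriv (m := n) (by norm_cast; omega)).differentiableAt
    (x := z + t • u)).hasFDerivAt.comp_hasDerivAt t hline
  exact (ContinuousMultilinearMap.apply ℝ (fun _ : Fin n => E) F m).hasFDerivAt.comp_hasDerivAt t hD

theorem norm_fderiv_apply_sub_taylorApproxDeriv_le {p : ℕ} (hp : 1 ≤ p) {g : E → F}
    (hg : ContDiff ℝ p g) {L : ℝ}
    (hLip : ∀ x y, ‖iteratedFDeriv ℝ p g x - iteratedFDeriv ℝ p g y‖ ≤ L * ‖x - y‖)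
    (z x v : E) :
    ‖fderiv ℝ g x v - taylorApproxDeriv p g z x v‖ ≤ L / p ! * ‖x - z‖ ^ p * ‖v‖ := by
  obtain ⟨n, rfl⟩ : ∃ n, p = n + 1 := ⟨p - 1, by omega⟩
  set u := x - z
  set c : ℕ → ℝ → F := fun k t =>
    iteratedFDeriv ℝ (k + 1) g (z + t • u) (Fin.snoc (fun _ => u) v)
  have hc : ∀ k < n, ∀ t, HasDerivAt (c k) (c (k + 1) t) t := fun k hk t => by
    have hgk : ContDiff ℝ (k + 1 + 1) g :=
      hg.of_le (by exact_mod_cast (show k + 2 ≤ n + 1 by omega))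
    simpa only [c, Fin.cons_snoc_const] using
      hgk.hasDerivAt_iteratedFDeriv_apply_line z u (Fin.snoc (fun _ => u) v) t
  have hC : ∀ t ∈ Set.Icc (0 : ℝ) 1, ‖c n t - c n 0‖ ≤ L * ‖u‖ ^ (n + 1) * ‖v‖ * t := by
    intro t ht
    have hsub : c n t - c n 0 = (iteratedFDeriv ℝ (n + 1) g (z + t • u)
        - iteratedFDeriv ℝ (n + 1) g z) (Fin.snoc (fun _ => u) v) := by
      simp [c]
    calc ‖c n t - c n 0‖
        ≤ ‖iteratedFDeriv ℝ (n + 1) g (z + t • u) - iteratedFDeriv ℝ (n + 1) g z‖ *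
          (‖u‖ ^ n * ‖v‖) := hsub ▸ ContinuousMultilinearMap.norm_apply_snoc_const_le _ u v
      _ ≤ L * (t * ‖u‖) * (‖u‖ ^ n * ‖v‖) := by
        gcongr
        simpa [norm_smul, abs_of_nonneg ht.1] using hLip (z + t • u) z
      _ = L * ‖u‖ ^ (n + 1) * ‖v‖ * t := by ring
  have h := norm_sub_taylor_sum_le_of_hasDerivAt n c _ hc hC 1 (by simp)
  have hc01 : c 0 1 = fderiv ℝ g x v := by
    simp only [c, u, Nat.reduceAdd, one_smul, add_sub_cancel, iteratedFDeriv_one_apply]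
    rfl
  simp only [hc01, one_pow, one_div] at h
  simpa [taylorApproxDeriv, c, u, div_eq_mul_inv, mul_comm, mul_left_comm, mul_assoc] using h

end GradientTaylor

theorem hasDerivAt_taylorApprox_line {d p : ℕ} {g : EuclideanSpace ℝ (Fin d) → ℝ}
    (hg : ContDiff ℝ p g) (z x v : EuclideanSpace ℝ (Fin d)) :
    HasDerivAt (fun s : ℝ => taylorApprox p g z (x + s • v)) (taylorApproxDeriv p g z x v) 0 := by
  have hterm (i : ℕ) := (iteratedFDeriv ℝ i g z).hasDerivAt_apply_const_add_smul (x - z) v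
  simp only [taylorApprox, add_sub_right_comm x _ z, one_div]
  refine (HasDerivAt.fun_sum fun i (_ : i ∈ range (p + 1)) =>
    (hterm i).const_mul (i ! : ℝ)⁻¹).congr_deriv ?_
  rw [sum_range_succ', taylorApproxDeriv]
  simp only [univ_eq_empty, sum_empty, mul_zero, add_zero]
  refine sum_congr rfl fun k hk => ?_
  have hgk : ContDiff ℝ (k + 1) g := hg.of_le (by norm_cast; simpa using hk)
  simp only [hgk.iteratedFDeriv_update_const_eq_snoc, sum_const, card_univ, Fintype.card_fin,
    nsmul_eq_mul, smul_eq_mul, Nat.factorial_succ, Nat.cast_mul]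
  field_simp

section Optimality

variable {E : Type*} [NormedAddCommGroup E] [NormedSpace ℝ E]

theorem IsMinOn.hasDerivAt_nonneg_of_Ici {ψ : ℝ → ℝ} {a b : ℝ} (hmin : IsMinOn ψ (Set.Ici a) a)
    (hψ : HasDerivAt ψ b a) : 0 ≤ b := by
  have hone : (1 : ℝ) ∈ posTangentConeAt (Set.Ici a) a :=
    mem_posTangentConeAt_of_segment_subset (by simp [segment_eq_Icc, Set.Icc_subset_Ici_self])
  simpa using hmin.localize.hasFDerivWithinAt_nonneg hψ.hasFDerivAt.hasFDerivWithinAt hone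

theorem neg_le_of_isMinOn_add_norm_pow {f : E → ℝ} {c a : ℝ} {q : ℕ} {x z v : E} (hc : 0 ≤ c)
    (hmin : IsMinOn (fun y => f y + c * ‖y - z‖ ^ (q + 1)) Set.univ x)
    (hf : HasDerivAt (fun s : ℝ => f (x + s • v)) a 0) :
    -(c * (q + 1) * ‖x - z‖ ^ q * ‖v‖) ≤ a := by
  set ψ := fun s : ℝ => f (x + s • v) + c * (‖x - z‖ + s * ‖v‖) ^ (q + 1)
  have hψ : HasDerivAt ψ (a + c * (q + 1) * ‖x - z‖ ^ q * ‖v‖) 0 := by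
    have hr := ((((hasDerivAt_id (0 : ℝ)).mul_const ‖v‖).const_add ‖x - z‖).pow (q + 1)).const_mul c
    refine (hf.add hr).congr_deriv ?_
    simp only [Nat.cast_add, Nat.cast_one, id_eq, zero_mul, add_zero, add_tsub_cancel_right,
      one_mul]
    ring
  have hψmin : IsMinOn ψ (Set.Ici 0) 0 := fun s (hs : 0 ≤ s) => by
    have hnorm : ‖x + s • v - z‖ ≤ ‖x - z‖ + s * ‖v‖ := by
      simpa [add_sub_right_comm, norm_smul, abs_of_nonneg hs] using norm_add_le (x - z) (s • v)
    calc ψ 0 = f x + c * ‖x - z‖ ^ (q + 1) := by simp [ψ]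
      _ ≤ f (x + s • v) + c * ‖x + s • v - z‖ ^ (q + 1) := hmin (Set.mem_univ _)
      _ ≤ ψ s := by simp only [ψ]; gcongr
  linarith [hψmin.hasDerivAt_nonneg_of_Ici hψ]

theorem abs_le_of_isMinOn_add_norm_pow {f : E → ℝ} {c a : ℝ} {q : ℕ} {x z v : E} (hc : 0 ≤ c)
    (hmin : IsMinOn (fun y => f y + c * ‖y - z‖ ^ (q + 1)) Set.univ x)
    (hf : HasDerivAt (fun s : ℝ => f (x + s • v)) a 0) :
    |a| ≤ c * (q + 1) * ‖x - z‖ ^ q * ‖v‖ := by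
  have hneg : HasDerivAt (fun s : ℝ => f (x + s • -v)) (-a) 0 := by
    have := HasDerivAt.scomp (0 : ℝ) (by simpa using hf) (hasDerivAt_neg' (0 : ℝ))
    simpa [Function.comp_def] using this
  have := neg_le_of_isMinOn_add_norm_pow hc hmin hneg
  rw [norm_neg] at this
  exact abs_le.2 ⟨neg_le_of_isMinOn_add_norm_pow hc hmin hf, by linarith⟩

end Optimality

theorem tensor_step_grad_bound_general {d : ℕ} (p : ℕ) (hp : 1 ≤ p)
    (g : EuclideanSpace ℝ (Fin d) → ℝ)
    (hg : ContDiff ℝ (p : ℕ∞) g)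
    (L M : ℝ) (hL : 0 < L)
    (hLip : ∀ x y : EuclideanSpace ℝ (Fin d),
      ‖iteratedFDeriv ℝ p g x - iteratedFDeriv ℝ p g y‖ ≤ L * ‖x - y‖)
    (hM : L ≤ M)
    (z xplus : EuclideanSpace ℝ (Fin d))
    (hmin : IsMinOn (fun x => taylorApprox p g z x +
      ((p : ℝ) * M / (Nat.factorial (p + 1) : ℝ)) * ‖x - z‖ ^ (p + 1)) Set.univ xplus) :
    ‖gradient g xplus‖ ≤ (((p : ℝ) * M + L) / (Nat.factorial p : ℝ)) * ‖xplus - z‖ ^ p := by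
  have hM₀ : 0 ≤ M := hL.le.trans hM
  have hcoef : (p : ℝ) * M / (p + 1)! * (p + 1) = p * M / p ! := by
    rw [Nat.factorial_succ]
    push_cast
    field_simp
  have hstep (v) : |taylorApproxDeriv p g z xplus v| ≤ p * M / p ! * ‖xplus - z‖ ^ p * ‖v‖ := by
    simpa only [hcoef] using abs_le_of_isMinOn_add_norm_pow (by positivity) hmin
      (hasDerivAt_taylorApprox_line hg z xplus v)
  rw [gradient, LinearIsometryEquiv.norm_map]
  refine ContinuousLinearMap.opNorm_le_bound _ (by have := hL.le; positivity) fun v => ?_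
  calc ‖fderiv ℝ g xplus v‖
      ≤ ‖taylorApproxDeriv p g z xplus v‖
          + ‖fderiv ℝ g xplus v - taylorApproxDeriv p g z xplus v‖ := norm_le_insert' _ _
    _ ≤ p * M / p ! * ‖xplus - z‖ ^ p * ‖v‖ + L / p ! * ‖xplus - z‖ ^ p * ‖v‖ :=
        add_le_add (hstep v) (norm_fderiv_apply_sub_taylorApproxDeriv_le hp hg hLip z xplus v)
    _ = (p * M + L) / p ! * ‖xplus - z‖ ^ p * ‖v‖ := by ring

theorem tensor_step_grad_bound {d : ℕ} (p : ℕ) (hp : 1 ≤ p)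
    (g : EuclideanSpace ℝ (Fin d) → ℝ)
    (hg : ContDiff ℝ (p : ℕ∞) g) (hconv : ConvexOn ℝ Set.univ g)
    (L M : ℝ) (hL : 0 < L)
    (hLip : ∀ x y : EuclideanSpace ℝ (Fin d),
      ‖iteratedFDeriv ℝ p g x - iteratedFDeriv ℝ p g y‖ ≤ L * ‖x - y‖)
    (hM : L ≤ M)
    (z xplus : EuclideanSpace ℝ (Fin d))
    (hmin : IsMinOn (fun x => taylorApprox p g z x +
      ((p : ℝ) * M / (Nat.factorial (p + 1) : ℝ)) * ‖x - z‖ ^ (p + 1)) Set.univ xplus) :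
    ‖gradient g xplus‖ ≤ (((p : ℝ) * M + L) / (Nat.factorial p : ℝ)) * ‖xplus - z‖ ^ p :=
  tensor_step_grad_bound_general p hp g hg L M hL hLip hM z xplus hmin
end

section
/- Let f : ℝ^d → ℝ be convex differentiable attaining its minimum f* with ‖x^0 − x*‖ ≤ R for some minimizer x*. Run the A-HPE framework with σ ∈ [0,1), η_k = η(1+k)^{(3p−1)/2}, β_k = Σ_{l=0}^k η_l, λ_k = η_k²/β_k. Then for all K ≥ 1, f(x_f^K) − f* ≤ ((3p+1)R²/(4η)) · K^{−(3p+1)/2}. -/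
/-!
Along the A-HPE iteration the potential `2 B_k (f(x_f^k) - f*) + ‖x^k - x*‖²`, with
`B_k = η_0 + ⋯ + η_{k-1}`, does not increase. Convexity at `x*` and at `x_f^k` bounds the change
of the function-value part by inner products with `g = ∇f(x_f^{k+1})`; since `β_k x_g^k` is
`η_k x^k + B_k x_f^k`, these combine with the change of `‖x^k - x*‖²` into
`2 β_k ⟪g, x_f^{k+1} - x_g^k⟫ + η_k² ‖g‖²`, which the relative-error condition makes nonpositive
once it is rescaled by `β_k λ_k = η_k²`. Hence `2 B_K (f(x_f^K) - f*) ≤ R²`, and comparing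
`B_K = ηc Σ_{l<K} (1 + l)^{s-1}` with `ηc ∫_0^K t^{s-1} dt`, `s = (3p+1)/2`, gives `B_K ≥ ηc K^s / s`.
-/

open Finset

open scoped RealInnerProductSpace

theorem ConvexOn.add_le_of_hasFDerivAt {E : Type*} [NormedAddCommGroup E] [NormedSpace ℝ E]
    {s : Set E} {f : E → ℝ} {f' : E →L[ℝ] ℝ} {a b : E} (hf : ConvexOn ℝ s f)
    (ha : a ∈ s) (hb : b ∈ s) (hf' : HasFDerivAt f f' a) :
    f a + f' (b - a) ≤ f b := by
  set line : ℝ →ᵃ[ℝ] E := AffineMap.lineMap a b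
  have hderiv : HasDerivAt (f ∘ line) (f' (b - a)) 0 := by
    have h0 : line 0 = a := AffineMap.lineMap_apply_zero a b
    exact (h0 ▸ hf').comp_hasDerivAt 0 AffineMap.hasDerivAt_lineMap
  have hslope := (hf.comp_affineMap line).le_slope_of_hasDerivAt
    (by simpa [line] using ha) (by simpa [line] using hb) one_pos hderiv
  simp only [map_sub, slope_def_field, Function.comp_apply, AffineMap.lineMap_apply_one,
    AffineMap.lineMap_apply_zero, sub_zero, div_one, line] at hslope ⊢
  linarith

theorem ConvexOn.add_inner_gradient_le_s17 {F : Type*} [NormedAddCommGroup F] [InnerProductSpace ℝ F]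
    [CompleteSpace F] {s : Set F} {f : F → ℝ} {a b : F} (hf : ConvexOn ℝ s f)
    (ha : a ∈ s) (hb : b ∈ s) (hdiff : DifferentiableAt ℝ f a) :
    f a + ⟪gradient f a, b - a⟫ ≤ f b :=
  hf.add_le_of_hasFDerivAt ha hb hdiff.hasGradientAt.hasFDerivAt

theorem two_mul_inner_add_mul_norm_sq_nonpos {F : Type*} [NormedAddCommGroup F]
    [InnerProductSpace ℝ F] {g v : F} {σ lam : ℝ} (hσ : σ ≤ 1) (hlam : 0 < lam)
    (h : ‖g + lam⁻¹ • v‖ ≤ σ * lam⁻¹ * ‖v‖) :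
    2 * ⟪g, v⟫ + lam * ‖g‖ ^ 2 ≤ 0 := by
  have hscaled : ‖lam • g + v‖ ≤ ‖v‖ :=
    calc ‖lam • g + v‖ = lam * ‖g + lam⁻¹ • v‖ := by
          rw [← norm_smul_of_nonneg hlam.le, smul_add, smul_inv_smul₀ hlam.ne']
      _ ≤ lam * (σ * lam⁻¹ * ‖v‖) := by gcongr
      _ = σ * ‖v‖ := by field_simp
      _ ≤ ‖v‖ := mul_le_of_le_one_left (norm_nonneg v) hσ
  have hsq := pow_le_pow_left₀ (norm_nonneg _) hscaled 2
  rw [norm_add_sq_real, norm_smul_of_nonneg hlam.le, real_inner_smul_left] at hsq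
  refine nonpos_of_mul_nonpos_right ?_ hlam
  linarith

section AHPE

variable {F : Type*} [NormedAddCommGroup F] [InnerProductSpace ℝ F] [CompleteSpace F]
  {f : F → ℝ} {σ : ℝ} {xstar : F}

theorem ahpe_potential_step (hconv : ConvexOn ℝ Set.univ f) (hσ : σ ≤ 1)
    {η β α lam : ℝ} (hη : 0 < η) (hηβ : η ≤ β) (hα : α = η / β) (hlam : lam = η ^ 2 / β)
    {x xf xg x' xf' : F} (hdiff : DifferentiableAt ℝ f xf')
    (hxg : xg = α • x + (1 - α) • xf)
    (hinexact : ‖gradient f xf' + lam⁻¹ • (xf' - xg)‖ ≤ σ * lam⁻¹ * ‖xf' - xg‖)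
    (hstep : x' = x - η • gradient f xf') :
    2 * β * (f xf' - f xstar) + ‖x' - xstar‖ ^ 2 ≤
      2 * (β - η) * (f xf - f xstar) + ‖x - xstar‖ ^ 2 := by
  set G := gradient f xf'
  have hβ : 0 < β := hη.trans_le hηβ
  have hconv_xstar : f xf' - f xstar ≤ ⟪G, xf' - xstar⟫ := by
    have := hconv.add_inner_gradient_le_s17 (Set.mem_univ _) (Set.mem_univ xstar) hdiff
    rw [← neg_sub, inner_neg_right] at this
    linarith
  have hconv_xf : f xf' - f xf ≤ ⟪G, xf' - xf⟫ := by
    have := hconv.add_inner_gradient_le_s17 (Set.mem_univ _) (Set.mem_univ xf) hdiff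
    rw [← neg_sub, inner_neg_right] at this
    linarith
  have hprox : 2 * β * ⟪G, xf' - xg⟫ + η ^ 2 * ‖G‖ ^ 2 ≤ 0 := by
    have h := two_mul_inner_add_mul_norm_sq_nonpos hσ (by rw [hlam]; positivity) hinexact
    have := mul_nonpos_of_nonneg_of_nonpos hβ.le h
    rw [hlam] at this
    field_simp at this
    linarith
  have hxg_inner : β * ⟪G, xg⟫ = η * ⟪G, x⟫ + (β - η) * ⟪G, xf⟫ := by
    rw [hxg, inner_add_right, real_inner_smul_right, real_inner_smul_right, hα]
    field_simp
  have hdist : ‖x' - xstar‖ ^ 2 = ‖x - xstar‖ ^ 2 - 2 * η * ⟪G, x - xstar⟫ + η ^ 2 * ‖G‖ ^ 2 := by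
    rw [hstep, sub_right_comm, norm_sub_sq_real, real_inner_smul_right, norm_smul,
      Real.norm_of_nonneg hη.le, real_inner_comm]
    ring
  have hη_xstar := mul_le_mul_of_nonneg_left hconv_xstar (by linarith : 0 ≤ 2 * η)
  have hη_xf := mul_le_mul_of_nonneg_left hconv_xf (by linarith : 0 ≤ 2 * (β - η))
  simp only [inner_sub_right] at hη_xstar hη_xf hprox hdist
  linarith

theorem ahpe_potential_le (hconv : ConvexOn ℝ Set.univ f) (hdiff : Differentiable ℝ f)
    (hσ : σ ≤ 1) {K : ℕ} {η β lam α : ℕ → ℝ} (hη : ∀ k, 0 < η k)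
    (hβ : ∀ k, β k = ∑ l ∈ range (k + 1), η l)
    (hlam : ∀ k, lam k = η k ^ 2 / β k) (hα : ∀ k, α k = η k / β k)
    {x xf xg : ℕ → F}
    (hxg : ∀ k < K, xg k = α k • x k + (1 - α k) • xf k)
    (hinexact : ∀ k < K,
      ‖gradient f (xf (k + 1)) + (lam k)⁻¹ • (xf (k + 1) - xg k)‖ ≤
        σ * (lam k)⁻¹ * ‖xf (k + 1) - xg k‖)
    (hstep : ∀ k < K, x (k + 1) = x k - η k • gradient f (xf (k + 1))) :
    ∀ n ≤ K, 2 * (∑ l ∈ range n, η l) * (f (xf n) - f xstar) + ‖x n - xstar‖ ^ 2 ≤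
      ‖x 0 - xstar‖ ^ 2 := by
  intro n hn
  induction n with
  | zero => simp
  | succ k ih =>
    have hk : k < K := hn
    have hβk : β k = (∑ l ∈ range k, η l) + η k := by rw [hβ, sum_range_succ]
    have hpartial : 0 ≤ ∑ l ∈ range k, η l := sum_nonneg fun l _ => (hη l).le
    have := ahpe_potential_step (xstar := xstar) hconv hσ (hη k) (by linarith) (hα k) (hlam k)
      (hdiff _) (hxg k hk) (hinexact k hk) (hstep k hk)
    rw [← hβ k, hβk]
    rw [hβk, add_sub_cancel_right] at this
    exact this.trans (ih hk.le)

end AHPE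

theorem rpow_div_le_sum_range_one_add_rpow {s : ℝ} (hs : 1 ≤ s) (K : ℕ) :
    (K : ℝ) ^ s / s ≤ ∑ l ∈ range K, (1 + (l : ℝ)) ^ (s - 1) := by
  have hmono : MonotoneOn (fun t : ℝ => t ^ (s - 1)) (Set.Icc 0 (0 + K)) :=
    fun u hu v _ huv => Real.rpow_le_rpow hu.1 huv (by linarith)
  have hint := hmono.integral_le_sum
  rw [integral_rpow (Or.inl (by linarith)), sub_add_cancel, Real.zero_rpow (by linarith)] at hint
  simpa [add_comm] using hint

theorem optimal_tensor_rate_general {d : ℕ}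
    (f : EuclideanSpace ℝ (Fin d) → ℝ)
    (hconv : ConvexOn ℝ Set.univ f) (hdiff : Differentiable ℝ f)
    (xstar : EuclideanSpace ℝ (Fin d)) (hmin : IsMinOn f Set.univ xstar)
    (R : ℝ) (p : ℕ) (hp : 1 ≤ p) (ηc : ℝ) (hηc : 0 < ηc)
    (K : ℕ) (hK : 1 ≤ K) (σ : ℝ) (hσ : σ ∈ Set.Ico (0 : ℝ) 1)
    (η β lam α : ℕ → ℝ)
    (hη : ∀ k, η k = ηc * ((1 : ℝ) + (k : ℝ)) ^ ((3 * (p : ℝ) - 1) / 2))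
    (hβ : ∀ k, β k = ∑ l ∈ Finset.range (k + 1), η l)
    (hlam : ∀ k, lam k = (η k) ^ 2 / β k)
    (hα : ∀ k, α k = η k / β k)
    (x xf xg : ℕ → EuclideanSpace ℝ (Fin d))
    (hR : ‖x 0 - xstar‖ ≤ R)
    (hxg : ∀ k < K, xg k = α k • x k + (1 - α k) • xf k)
    (hinexact : ∀ k < K,
      ‖gradient f (xf (k + 1)) + (lam k)⁻¹ • (xf (k + 1) - xg k)‖ ≤
        σ * (lam k)⁻¹ * ‖xf (k + 1) - xg k‖)
    (hstep : ∀ k < K, x (k + 1) = x k - η k • gradient f (xf (k + 1))) :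
    f (xf K) - f xstar ≤
      ((3 * (p : ℝ) + 1) * R ^ 2 / (4 * ηc)) * (K : ℝ) ^ (-(3 * (p : ℝ) + 1) / 2) := by
  set s : ℝ := (3 * p + 1) / 2
  have hs : 1 ≤ s := by
    have : (1 : ℝ) ≤ p := by exact_mod_cast hp
    show 1 ≤ (3 * (p : ℝ) + 1) / 2
    linarith
  have hη' : ∀ k, η k = ηc * (1 + (k : ℝ)) ^ (s - 1) := fun k => by
    rw [hη]; congr 2; ring
  have hpotential := ahpe_potential_le (xstar := xstar) hconv hdiff hσ.2.le
    (fun k => by rw [hη']; positivity) hβ hlam hα hxg hinexact hstep K le_rfl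
  have hsum : ηc * ((K : ℝ) ^ s / s) ≤ ∑ l ∈ range K, η l := by
    simp only [hη', ← mul_sum]
    gcongr
    exact rpow_div_le_sum_range_one_add_rpow hs K
  have hgap : 0 ≤ f (xf K) - f xstar := sub_nonneg.2 (hmin (Set.mem_univ _))
  have hK : (0 : ℝ) < K := by exact_mod_cast hK
  have hKs : 0 < (K : ℝ) ^ s := Real.rpow_pos_of_pos hK s
  have hR2 := pow_le_pow_left₀ (norm_nonneg _) hR 2
  rw [show -(3 * (p : ℝ) + 1) / 2 = -s by ring, Real.rpow_neg hK.le]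
  calc f (xf K) - f xstar
      ≤ R ^ 2 / (2 * (ηc * ((K : ℝ) ^ s / s))) := by
        rw [le_div_iff₀ (by positivity)]
        linarith [mul_le_mul_of_nonneg_right hsum hgap, sq_nonneg ‖x K - xstar‖]
    _ = (3 * p + 1) * R ^ 2 / (4 * ηc) * ((K : ℝ) ^ s)⁻¹ := by
        field_simp [s]
        ring

theorem optimal_tensor_rate {d : ℕ}
    (f : EuclideanSpace ℝ (Fin d) → ℝ)
    (hconv : ConvexOn ℝ Set.univ f) (hdiff : Differentiable ℝ f)
    (xstar : EuclideanSpace ℝ (Fin d)) (hmin : IsMinOn f Set.univ xstar)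
    (R : ℝ) (p : ℕ) (hp : 1 ≤ p) (ηc : ℝ) (hηc : 0 < ηc)
    (K : ℕ) (hK : 1 ≤ K) (σ : ℝ) (hσ : σ ∈ Set.Ico (0 : ℝ) 1)
    (η β lam α : ℕ → ℝ)
    (hη : ∀ k, η k = ηc * ((1 : ℝ) + (k : ℝ)) ^ ((3 * (p : ℝ) - 1) / 2))
    (hβ : ∀ k, β k = ∑ l ∈ Finset.range (k + 1), η l)
    (hlam : ∀ k, lam k = (η k) ^ 2 / β k)
    (hα : ∀ k, α k = η k / β k)
    (x xf xg : ℕ → EuclideanSpace ℝ (Fin d))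
    (hx0 : x 0 = xf 0)
    (hR : ‖x 0 - xstar‖ ≤ R)
    (hxg : ∀ k < K, xg k = α k • x k + (1 - α k) • xf k)
    (hinexact : ∀ k < K,
      ‖gradient f (xf (k + 1)) + (lam k)⁻¹ • (xf (k + 1) - xg k)‖ ≤
        σ * (lam k)⁻¹ * ‖xf (k + 1) - xg k‖)
    (hstep : ∀ k < K, x (k + 1) = x k - η k • gradient f (xf (k + 1))) :
    f (xf K) - f xstar ≤
      ((3 * (p : ℝ) + 1) * R ^ 2 / (4 * ηc)) * (K : ℝ) ^ (-(3 * (p : ℝ) + 1) / 2) :=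
  optimal_tensor_rate_general f hconv hdiff xstar hmin R p hp ηc hηc K hK σ hσ η β lam α hη hβ hlam
    hα x xf xg hR hxg hinexact hstep
end
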